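/- For every k ≥ 1, the gradient error of the IAG-M iteration satisfies ‖e^k‖ ≤ 3·γ·L²·K · max{ dist_ℓ : max(k − 2K, 0) ≤ ℓ ≤ k − 1 } + β·L · ∑_{j = max(k−K,0)}^{k−1} ‖x^j − x^{j−1}‖, where the term ‖x^0 − x^{−1}‖ corresponding to j = 0 is interpreted as 0. -/
import Mathlib

private lemma iagm_tele {E : Type*} [NormedAddCommGroup E] (x : ℕ → E) (a b : ℕ) (h : a ≤ b) :
    ‖x a - x b‖ ≤ ∑ j ∈ Finset.Ico a b, ‖x (j+1) - x j‖ := by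
  induction b, h using Nat.le_induction with
  | base => simp
  | succ b hb ih =>
    rw [Finset.sum_Ico_succ_top hb]
    calc ‖x a - x (b+1)‖ ≤ ‖x a - x b‖ + ‖x b - x (b+1)‖ :=
          norm_sub_le_norm_sub_add_norm_sub _ _ _
      _ = ‖x a - x b‖ + ‖x (b+1) - x b‖ := by rw [norm_sub_rev (x b)]
      _ ≤ _ := by linarith

/-- Gradient error bound for the IAG method with momentum: the error is bounded by the IAG
bound plus a momentum contribution (the term for `j = 0` is interpreted as `0`). -/
theorem iagm_grad_error_bound
    (n m : ℕ) (hm : 1 ≤ m)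
    (f : Fin m → EuclideanSpace ℝ (Fin n) → ℝ)
    (Li : Fin m → ℝ) (hLi : ∀ i, 0 ≤ Li i)
    (L : ℝ) (hL : L = ∑ i, Li i)
    (hconv : ∀ i, ConvexOn ℝ Set.univ (f i))
    (hdiff : ∀ i, Differentiable ℝ (f i))
    (hlip : ∀ i y z, ‖gradient (f i) y - gradient (f i) z‖ ≤ Li i * ‖y - z‖)
    (K : ℕ) (hK : 1 ≤ K)
    (τ : Fin m → ℕ → ℕ)
    (hτ : ∀ i k, k - K ≤ τ i k ∧ τ i k ≤ k)
    (hτ0 : ∀ i, τ i 0 = 0)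
    (F : EuclideanSpace ℝ (Fin n) → ℝ) (hF : F = fun y => ∑ i, f i y)
    (x g e : ℕ → EuclideanSpace ℝ (Fin n))
    (hg : ∀ k, g k = ∑ i, gradient (f i) (x (τ i k)))
    (he : ∀ k, e k = g k - gradient F (x k))
    (γ : ℝ) (hγ : 0 < γ) (β : ℝ) (hβ : 0 ≤ β)
    (hx1 : x 1 = x 0 - γ • g 0)
    (hxm : ∀ k, 1 ≤ k → x (k + 1) = x k - γ • g k + β • (x k - x (k - 1)))
    (xs : EuclideanSpace ℝ (Fin n)) (hgxs : gradient F xs = 0) :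
    ∀ k, ∀ _hk : 1 ≤ k, ‖e k‖ ≤
      3 * γ * L ^ 2 * K *
        (Finset.Icc (k - 2 * K) (k - 1)).sup' (Finset.nonempty_Icc.mpr (by omega))
          (fun ℓ => ‖x ℓ - xs‖) +
      β * L * ∑ j ∈ Finset.Ico (k - K) k, (if j = 0 then 0 else ‖x j - x (j - 1)‖) := by
  intro k hk
  have hL0 : 0 ≤ L := by rw [hL]; exact Finset.sum_nonneg fun i _ => hLi i
  have hgradsum : ∀ y, gradient F y = ∑ i, gradient (f i) y := by
    intro y
    rw [hF]
    simp only [gradient]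
    rw [fderiv_fun_sum (fun i _ => (hdiff i).differentiableAt)]
    exact map_sum (InnerProductSpace.toDual ℝ _).symm _ _
  set M := (Finset.Icc (k - 2 * K) (k - 1)).sup'
      (Finset.nonempty_Icc.mpr (by omega : k - 2*K ≤ k - 1)) (fun ℓ => ‖x ℓ - xs‖) with hM
  have hMmem : ∀ ℓ, k - 2*K ≤ ℓ → ℓ ≤ k - 1 → ‖x ℓ - xs‖ ≤ M := fun ℓ h1 h2 =>
    Finset.le_sup' (fun ℓ => ‖x ℓ - xs‖) (Finset.mem_Icc.mpr ⟨h1, h2⟩)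
  have hM0 : 0 ≤ M := le_trans (norm_nonneg _) (hMmem (k-1) (by omega) le_rfl)
  -- bound on ‖g j‖
  have hgM : ∀ j, k - K ≤ j → j ≤ k - 1 → ‖g j‖ ≤ L * M := by
    intro j hj1 hj2
    have h0 : ∑ i, gradient (f i) xs = 0 := by rw [← hgradsum, hgxs]
    calc ‖g j‖ = ‖∑ i, (gradient (f i) (x (τ i j)) - gradient (f i) xs)‖ := by
          rw [hg, Finset.sum_sub_distrib, h0, sub_zero]
      _ ≤ ∑ i, ‖gradient (f i) (x (τ i j)) - gradient (f i) xs‖ := norm_sum_le _ _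
      _ ≤ ∑ i, Li i * ‖x (τ i j) - xs‖ := Finset.sum_le_sum fun i _ => hlip i _ _
      _ ≤ ∑ i, Li i * M := Finset.sum_le_sum fun i _ => by
          refine mul_le_mul_of_nonneg_left (hMmem _ ?_ ?_) (hLi i)
          · have := (hτ i j).1; omega
          · have := (hτ i j).2; omega
      _ = L * M := by rw [hL, ← Finset.sum_mul]
  -- step bound
  have hstep : ∀ j ∈ Finset.Ico (k - K) k, ‖x (j+1) - x j‖ ≤
      γ * (L * M) + β * (if j = 0 then 0 else ‖x j - x (j - 1)‖) := by
    intro j hj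
    rw [Finset.mem_Ico] at hj
    by_cases hj0 : j = 0
    · subst hj0
      have h2 : x 1 - x 0 = -(γ • g 0) := by rw [hx1]; abel
      rw [h2, norm_neg, norm_smul, Real.norm_eq_abs, abs_of_pos hγ]
      norm_num
      exact mul_le_mul_of_nonneg_left (hgM 0 (by omega) (by omega)) hγ.le
    · rw [if_neg hj0]
      have h1 : 1 ≤ j := by omega
      have : x (j+1) - x j = -(γ • g j) + β • (x j - x (j-1)) := by
        rw [hxm j h1]; abel
      rw [this]
      calc ‖-(γ • g j) + β • (x j - x (j-1))‖
          ≤ ‖-(γ • g j)‖ + ‖β • (x j - x (j-1))‖ := norm_add_le _ _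
        _ = γ * ‖g j‖ + β * ‖x j - x (j-1)‖ := by
            rw [norm_neg, norm_smul, norm_smul, Real.norm_eq_abs, Real.norm_eq_abs,
              abs_of_pos hγ, abs_of_nonneg hβ]
        _ ≤ γ * (L * M) + β * ‖x j - x (j-1)‖ := by
            have := hgM j hj.1 (by omega)
            nlinarith
  set S := ∑ j ∈ Finset.Ico (k - K) k, (if j = 0 then 0 else ‖x j - x (j - 1)‖) with hS
  have hS0 : 0 ≤ S := Finset.sum_nonneg fun j _ => by positivity
  set T := ∑ j ∈ Finset.Ico (k - K) k, ‖x (j+1) - x j‖ with hT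
  -- error bound
  have hek : ‖e k‖ ≤ L * T := by
    calc ‖e k‖ = ‖∑ i, (gradient (f i) (x (τ i k)) - gradient (f i) (x k))‖ := by
          rw [he, hg, hgradsum, Finset.sum_sub_distrib]
      _ ≤ ∑ i, ‖gradient (f i) (x (τ i k)) - gradient (f i) (x k)‖ := norm_sum_le _ _
      _ ≤ ∑ i, Li i * ‖x (τ i k) - x k‖ := Finset.sum_le_sum fun i _ => hlip i _ _
      _ ≤ ∑ i, Li i * T := Finset.sum_le_sum fun i _ => by
          refine mul_le_mul_of_nonneg_left ?_ (hLi i)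
          refine le_trans (iagm_tele x _ _ (hτ i k).2) ?_
          refine Finset.sum_le_sum_of_subset_of_nonneg ?_ (fun _ _ _ => norm_nonneg _)
          apply Finset.Ico_subset_Ico_left
          exact (hτ i k).1
      _ = L * T := by rw [hL, ← Finset.sum_mul]
  have hTb : T ≤ K * (γ * (L * M)) + β * S := by
    calc T ≤ ∑ j ∈ Finset.Ico (k - K) k,
          (γ * (L * M) + β * (if j = 0 then 0 else ‖x j - x (j - 1)‖)) :=
          Finset.sum_le_sum hstep
      _ = (Finset.Ico (k - K) k).card * (γ * (L * M)) + β * S := by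
          rw [Finset.sum_add_distrib, Finset.sum_const, ← Finset.mul_sum, nsmul_eq_mul]
      _ ≤ K * (γ * (L * M)) + β * S := by
          have hc : ((Finset.Ico (k - K) k).card : ℝ) ≤ K := by
            rw [Nat.card_Ico]; exact_mod_cast (by omega : k - (k - K) ≤ K)
          have : 0 ≤ γ * (L * M) := by positivity
          nlinarith
  calc ‖e k‖ ≤ L * T := hek
    _ ≤ L * (K * (γ * (L * M)) + β * S) := mul_le_mul_of_nonneg_left hTb hL0
    _ ≤ 3 * γ * L ^ 2 * K * M + β * L * S := by nlinarith [mul_nonneg (mul_nonneg hγ.le (sq_nonneg L)) (mul_nonneg (Nat.cast_nonneg (α := ℝ) K) hM0)]
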